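/- Let L(λ) = [[M(λ), K₂(λ)ᵀ], [K₁(λ), 0]] be a block full rank pencil of degree 1, with M(λ) of size p̂×m̂, K₁(λ) of size m₁×m̂ and K₂(λ) of size p₂×p̂, and let N₁(λ) ∈ F(λ)^{(m̂−m₁)×m̂} and N₂(λ) ∈ F(λ)^{(p̂−p₂)×p̂} be rational bases dual to K₁(λ) and K₂(λ), respectively. If for i = 1, 2 the pencil rev₁ K_i(λ) = λK_i(1/λ) has full row rank at 0, and there exist integers t₁, t₂ such that rev_{t_i} N_i(λ) = λ^{t_i}N_i(1/λ) has full row rank at 0, then rev L(λ) = λL(1/λ) is equivalent at 0 to diag(rev_{1+t₁+t₂} G(λ), I_{m₁+p₂}), where G(λ) = N₂(λ)M(λ)N₁(λ)ᵀ; that is, L(λ) is a linearization with empty state matrix of G(λ) at ∞ of grade 1+t₁+t₂. -/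

import Mathlib

set_option synthInstance.maxHeartbeats 1000000
set_option maxHeartbeats 1000000

open Matrix

namespace RM

variable {F : Type*} [Field F]

/-- Evaluation of a rational function at a point, as numerator over denominator. -/
noncomputable def rEval (x : RatFunc F) (a : F) : F := x.num.eval a / x.denom.eval a

/-- A rational function is defined (bounded) at a point of `F`, i.e. the denominator of its
reduced representation does not vanish there. -/
def RDefinedAt (x : RatFunc F) (a : F) : Prop := Polynomial.eval a x.denom ≠ 0

/-- The substitution `λ ↦ 1/λ` applied to a rational function. -/
noncomputable def rAtInv (x : RatFunc F) : RatFunc F :=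
  Polynomial.eval₂ (algebraMap F (RatFunc F)) (RatFunc.X : RatFunc F)⁻¹ x.num /
    Polynomial.eval₂ (algebraMap F (RatFunc F)) (RatFunc.X : RatFunc F)⁻¹ x.denom

/-- The `g`-reversal `λ^g · x(1/λ)` of a rational function. -/
noncomputable def rRev (g : ℤ) (x : RatFunc F) : RatFunc F :=
  (RatFunc.X : RatFunc F) ^ g * rAtInv x

/-- A rational function is proper. -/
def ProperR (x : RatFunc F) : Prop := x.num.degree ≤ x.denom.degree

/-- A rational function is strictly proper. -/
def StrictlyProperR (x : RatFunc F) : Prop := x.num.degree < x.denom.degree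

section General

variable {ι κ : Type*} [Fintype ι] [Fintype κ] [DecidableEq ι] [DecidableEq κ]

/-- A rational matrix is defined (bounded) at a point of `F`. -/
def DefinedAt (R : Matrix ι κ (RatFunc F)) (a : F) : Prop := ∀ i j, RDefinedAt (R i j) a

/-- Entrywise evaluation of a rational matrix at a point of `F`. -/
noncomputable def matEval (R : Matrix ι κ (RatFunc F)) (a : F) : Matrix ι κ F := fun i j =>
  rEval (R i j) a

/-- A square rational matrix is regular (invertible) at a point of `F`. -/
def RegularAt (R : Matrix ι ι (RatFunc F)) (a : F) : Prop :=
  DefinedAt R a ∧ IsUnit (matEval R a).det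

/-- A square rational matrix is regular in a subset of `F`. -/
def RegularOn (R : Matrix ι ι (RatFunc F)) (S : Set F) : Prop := ∀ a ∈ S, RegularAt R a

/-- Two rational matrices of the same size are equivalent at a point of `F`. -/
def EquivAt (G H : Matrix ι κ (RatFunc F)) (a : F) : Prop :=
  ∃ (R₁ : Matrix ι ι (RatFunc F)) (R₂ : Matrix κ κ (RatFunc F)),
    RegularAt R₁ a ∧ RegularAt R₂ a ∧ R₁ * G * R₂ = H

/-- Two rational matrices of the same size are equivalent in a subset of `F`. -/
def EquivOn (G H : Matrix ι κ (RatFunc F)) (S : Set F) : Prop :=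
  ∃ (R₁ : Matrix ι ι (RatFunc F)) (R₂ : Matrix κ κ (RatFunc F)),
    RegularOn R₁ S ∧ RegularOn R₂ S ∧ R₁ * G * R₂ = H

/-- A rational matrix is proper. -/
def ProperM (R : Matrix ι κ (RatFunc F)) : Prop := ∀ i j, ProperR (R i j)

/-- A square rational matrix is biproper: proper with a proper inverse. -/
def Biproper (R : Matrix ι ι (RatFunc F)) : Prop :=
  ProperM R ∧ ∃ S : Matrix ι ι (RatFunc F), ProperM S ∧ R * S = 1 ∧ S * R = 1

/-- Two rational matrices of the same size are equivalent at infinity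
(via biproper matrices). -/
def EquivAtInf (G H : Matrix ι κ (RatFunc F)) : Prop :=
  ∃ (B₁ : Matrix ι ι (RatFunc F)) (B₂ : Matrix κ κ (RatFunc F)),
    Biproper B₁ ∧ Biproper B₂ ∧ B₁ * G * B₂ = H

/-- The `g`-reversal `λ^g · G(1/λ)` of a rational matrix. -/
noncomputable def matRev (g : ℤ) (R : Matrix ι κ (RatFunc F)) : Matrix ι κ (RatFunc F) :=
  fun i j => rRev g (R i j)

/-- A polynomial matrix viewed as a rational matrix. -/
noncomputable def toRat (P : Matrix ι κ (Polynomial F)) : Matrix ι κ (RatFunc F) :=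
  P.map (algebraMap (Polynomial F) (RatFunc F))

/-- The degree of a polynomial matrix: the maximum of the degrees of its entries. -/
noncomputable def matDeg (P : Matrix ι κ (Polynomial F)) : ℕ :=
  Finset.univ.sup fun p : ι × κ => (P p.1 p.2).natDegree

/-- The `d`-reversal `λ^d · P(1/λ)` of a polynomial matrix (entrywise reflection of the
coefficients up to degree `d`).  For `d = matDeg P` this is the reversal `rev P`. -/
noncomputable def polyRev (d : ℕ) (P : Matrix ι κ (Polynomial F)) : Matrix ι κ (Polynomial F) :=
  fun i j => (P i j).reflect d

/-- Entrywise evaluation of a polynomial matrix at a point of `F`. -/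
noncomputable def polyEval (P : Matrix ι κ (Polynomial F)) (a : F) : Matrix ι κ F :=
  fun i j => (P i j).eval a

/-- A rational matrix is a polynomial matrix. -/
def IsPolyM (R : Matrix ι κ (RatFunc F)) : Prop := ∀ i j, (R i j).denom = 1

/-- A rational matrix is a matrix pencil (a polynomial matrix of degree at most 1). -/
def IsPencilM (R : Matrix ι κ (RatFunc F)) : Prop :=
  ∀ i j, (R i j).denom = 1 ∧ (R i j).num.degree ≤ 1

/-- A polynomial matrix is a matrix pencil (degree at most 1). -/
def IsPencilP (P : Matrix ι κ (Polynomial F)) : Prop := ∀ i j, (P i j).degree ≤ 1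

/-- The matrix pencil `M1 · λ + M0` built from two constant matrices. -/
noncomputable def pencil (M1 M0 : Matrix ι κ F) : Matrix ι κ (Polynomial F) := fun i j =>
  Polynomial.C (M1 i j) * Polynomial.X + Polynomial.C (M0 i j)

/-- The polynomial part of a rational matrix (entrywise Euclidean quotient). -/
noncomputable def polyPartM (G : Matrix ι κ (RatFunc F)) : Matrix ι κ (Polynomial F) :=
  fun i j => (G i j).num / (G i j).denom

/-- A rational matrix is strictly proper. -/
def StrictlyProperM (G : Matrix ι κ (RatFunc F)) : Prop := ∀ i j, StrictlyProperR (G i j)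

open Classical in
/-- The grade used in the reversal `rev G` of a rational matrix: the degree of its polynomial
part if `G` is not strictly proper, and `0` otherwise. -/
noncomputable def revGrade (G : Matrix ι κ (RatFunc F)) : ℕ :=
  if StrictlyProperM G then 0 else matDeg (polyPartM G)

end General

/-- `(λ - a)^k`, for an integer `k`, as a rational function. -/
noncomputable def localPow (a : F) (k : ℤ) : RatFunc F :=
  (algebraMap (Polynomial F) (RatFunc F) (Polynomial.X - Polynomial.C a)) ^ k

/-- The local Smith–McMillan diagonal form at `a` with invariant orders `ν`. -/
noncomputable def localDiag (p m : ℕ) (a : F) {r : ℕ} (ν : Fin r → ℤ) :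
    Matrix (Fin p) (Fin m) (RatFunc F) := fun i j =>
  if h : (i : ℕ) = (j : ℕ) ∧ (j : ℕ) < r then localPow a (ν ⟨(j : ℕ), h.2⟩) else 0

/-- The Smith–McMillan diagonal form at infinity with invariant orders `μ`,
with diagonal entries `λ^(-μ i)`. -/
noncomputable def infDiag (p m : ℕ) {r : ℕ} (μ : Fin r → ℤ) :
    Matrix (Fin p) (Fin m) (RatFunc F) := fun i j =>
  if h : (i : ℕ) = (j : ℕ) ∧ (j : ℕ) < r then (RatFunc.X : RatFunc F) ^ (-(μ ⟨(j : ℕ), h.2⟩))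
  else 0

/-- `ν` is the (monotone) tuple of invariant orders of `G` at the point `a ∈ F`. -/
def IsInvOrdersAt {p m : ℕ} (G : Matrix (Fin p) (Fin m) (RatFunc F)) (a : F) {r : ℕ}
    (ν : Fin r → ℤ) : Prop :=
  r = G.rank ∧ Monotone ν ∧ EquivAt G (localDiag p m a ν) a

/-- `μ` is the (monotone) tuple of invariant orders of `G` at infinity. -/
def IsInvOrdersAtInf {p m : ℕ} (G : Matrix (Fin p) (Fin m) (RatFunc F)) {r : ℕ}
    (μ : Fin r → ℤ) : Prop :=
  r = G.rank ∧ Monotone μ ∧ EquivAtInf G (infDiag p m μ)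

/-- The multiset of values of a tuple of invariant orders. -/
def ordMS {r : ℕ} (ν : Fin r → ℤ) : Multiset ℤ := Multiset.map ν Finset.univ.val

/-- The multiset of pole partial multiplicities (exponents of the pole elementary divisors):
the negatives of the negative invariant orders. -/
def poleMS {r : ℕ} (ν : Fin r → ℤ) : Multiset ℤ :=
  Multiset.map (fun x => -x) ((ordMS ν).filter fun x => x < 0)

/-- The multiset of zero partial multiplicities (exponents of the zero elementary divisors):
the positive invariant orders. -/
def zeroMS {r : ℕ} (ν : Fin r → ℤ) : Multiset ℤ := (ordMS ν).filter fun x => 0 < x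

/-- `E` is the multiset of partial multiplicities (exponents of the elementary divisors) of the
polynomial matrix `P` at `a`. -/
def IsElemDivExps {p m : ℕ} (P : Matrix (Fin p) (Fin m) (Polynomial F)) (a : F)
    (E : Multiset ℤ) : Prop :=
  ∃ (s : ℕ) (μ : Fin s → ℤ), IsInvOrdersAt (toRat P) a μ ∧ E = zeroMS μ

/-- The polynomial system matrix `[[A, B], [-C, D]]`. -/
noncomputable def sysMat {n q r : ℕ} (A : Matrix (Fin n) (Fin n) (Polynomial F))
    (B : Matrix (Fin n) (Fin r) (Polynomial F)) (C : Matrix (Fin q) (Fin n) (Polynomial F))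
    (D : Matrix (Fin q) (Fin r) (Polynomial F)) :
    Matrix (Fin (n + q)) (Fin (n + r)) (Polynomial F) :=
  Matrix.reindex finSumFinEquiv finSumFinEquiv (Matrix.fromBlocks A B (-C) D)

/-- The transfer function matrix `D + C A⁻¹ B` of the polynomial system matrix
`[[A, B], [-C, D]]`. -/
noncomputable def transferFn {n q r : ℕ} (A : Matrix (Fin n) (Fin n) (Polynomial F))
    (B : Matrix (Fin n) (Fin r) (Polynomial F)) (C : Matrix (Fin q) (Fin n) (Polynomial F))
    (D : Matrix (Fin q) (Fin r) (Polynomial F)) : Matrix (Fin q) (Fin r) (RatFunc F) :=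
  toRat D + toRat C * (toRat A)⁻¹ * toRat B

/-- The polynomial system matrix with blocks `A, B, C` is minimal at `a ∈ F`:
`[A(a); C(a)]` and `[A(a) B(a)]` both have rank `n`. -/
def MinimalAt {n q r : ℕ} (A : Matrix (Fin n) (Fin n) (Polynomial F))
    (B : Matrix (Fin n) (Fin r) (Polynomial F)) (C : Matrix (Fin q) (Fin n) (Polynomial F))
    (a : F) : Prop :=
  (Matrix.fromRows (polyEval A a) (polyEval C a)).rank = n ∧
    (Matrix.fromCols (polyEval A a) (polyEval B a)).rank = n

/-- The polynomial system matrix with blocks `A, B, C` is minimal in a subset of `F`. -/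
def MinimalOn {n q r : ℕ} (A : Matrix (Fin n) (Fin n) (Polynomial F))
    (B : Matrix (Fin n) (Fin r) (Polynomial F)) (C : Matrix (Fin q) (Fin n) (Polynomial F))
    (S : Set F) : Prop := ∀ a ∈ S, MinimalAt A B C a

/-- `diag(G, I_s)`. -/
noncomputable def diagPad {p m : ℕ} (G : Matrix (Fin p) (Fin m) (RatFunc F)) (s : ℕ) :
    Matrix (Fin (p + s)) (Fin (m + s)) (RatFunc F) :=
  Matrix.reindex finSumFinEquiv finSumFinEquiv
    (Matrix.fromBlocks G 0 0 (1 : Matrix (Fin s) (Fin s) (RatFunc F)))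

/-- The polynomial system matrix `[[A, B], [-C, D]]` (of size `(n+q) × (n+r)`, with state
matrix `A`) is a (local) linearization of the rational matrix `G` (of size `p × m`)
at the point `a ∈ F`. -/
def IsLinearizationAt {n q r p m : ℕ} (A : Matrix (Fin n) (Fin n) (Polynomial F))
    (B : Matrix (Fin n) (Fin r) (Polynomial F)) (C : Matrix (Fin q) (Fin n) (Polynomial F))
    (D : Matrix (Fin q) (Fin r) (Polynomial F)) (G : Matrix (Fin p) (Fin m) (RatFunc F))
    (a : F) : Prop :=
  MinimalAt A B C a ∧
    ∃ (s₁ s₂ : ℕ) (h₁ : p + s₁ = q + s₂) (h₂ : m + s₁ = r + s₂),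
      ∃ (R₁ : Matrix (Fin (q + s₂)) (Fin (q + s₂)) (RatFunc F))
        (R₂ : Matrix (Fin (r + s₂)) (Fin (r + s₂)) (RatFunc F)),
        RegularAt R₁ a ∧ RegularAt R₂ a ∧
          R₁ * Matrix.reindex (finCongr h₁) (finCongr h₂) (diagPad G s₁) * R₂ =
            diagPad (transferFn A B C D) s₂

/-- Linearization in a subset of `F`: linearization at every point of the subset. -/
def IsLinearizationOn {n q r p m : ℕ} (A : Matrix (Fin n) (Fin n) (Polynomial F))
    (B : Matrix (Fin n) (Fin r) (Polynomial F)) (C : Matrix (Fin q) (Fin n) (Polynomial F))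
    (D : Matrix (Fin q) (Fin r) (Polynomial F)) (G : Matrix (Fin p) (Fin m) (RatFunc F))
    (S : Set F) : Prop :=
  ∀ a ∈ S, IsLinearizationAt A B C D G a

/-- The polynomial system matrix `L = [[A, B], [-C, D]]` is a linearization of the rational
matrix `G` at infinity of grade `g`:  `rev L` is minimal at `0` and
`diag(rev_g G, I_{s₁})` is equivalent at `0` to `diag(rev_ℓ Ĝ, I_{s₂})`, where
`ℓ = deg L` and `Ĝ` is the transfer function matrix of `L`. -/
def IsLinearizationAtInf {n q r p m : ℕ} (A : Matrix (Fin n) (Fin n) (Polynomial F))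
    (B : Matrix (Fin n) (Fin r) (Polynomial F)) (C : Matrix (Fin q) (Fin n) (Polynomial F))
    (D : Matrix (Fin q) (Fin r) (Polynomial F)) (G : Matrix (Fin p) (Fin m) (RatFunc F))
    (g : ℤ) : Prop :=
  MinimalAt (polyRev (matDeg (sysMat A B C D)) A) (polyRev (matDeg (sysMat A B C D)) B)
      (polyRev (matDeg (sysMat A B C D)) C) (0 : F) ∧
    ∃ (s₁ s₂ : ℕ) (h₁ : p + s₁ = q + s₂) (h₂ : m + s₁ = r + s₂),
      ∃ (Q₁ : Matrix (Fin (q + s₂)) (Fin (q + s₂)) (RatFunc F))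
        (Q₂ : Matrix (Fin (r + s₂)) (Fin (r + s₂)) (RatFunc F)),
        RegularAt Q₁ 0 ∧ RegularAt Q₂ 0 ∧
          Q₁ * Matrix.reindex (finCongr h₁) (finCongr h₂) (diagPad (matRev g G) s₁) * Q₂ =
            diagPad (matRev ((matDeg (sysMat A B C D) : ℕ) : ℤ) (transferFn A B C D)) s₂

/-- `g`-strong linearization: a linearization in `F` which is also a linearization at
infinity of grade `g`. -/
def IsStrongLinearization {n q r p m : ℕ} (A : Matrix (Fin n) (Fin n) (Polynomial F))
    (B : Matrix (Fin n) (Fin r) (Polynomial F)) (C : Matrix (Fin q) (Fin n) (Polynomial F))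
    (D : Matrix (Fin q) (Fin r) (Polynomial F)) (G : Matrix (Fin p) (Fin m) (RatFunc F))
    (g : ℤ) : Prop :=
  IsLinearizationOn A B C D G Set.univ ∧ IsLinearizationAtInf A B C D G g

/-- A rational matrix has full row rank at `a ∈ F`. -/
def FullRowRankAt {p m : ℕ} (R : Matrix (Fin p) (Fin m) (RatFunc F)) (a : F) : Prop :=
  DefinedAt R a ∧ (matEval R a).rank = p

/-- A rational matrix has full row rank in a subset of `F`. -/
def FullRowRankOn {p m : ℕ} (R : Matrix (Fin p) (Fin m) (RatFunc F)) (S : Set F) : Prop :=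
  ∀ a ∈ S, FullRowRankAt R a

/-- The `i`-th row degree of a polynomial matrix. -/
noncomputable def rowDegM {p m : ℕ} (K : Matrix (Fin p) (Fin m) (Polynomial F)) (i : Fin p) :
    ℕ := Finset.univ.sup fun j => (K i j).natDegree

/-- The highest row degree coefficient matrix of a polynomial matrix. -/
noncomputable def hrdMat {p m : ℕ} (K : Matrix (Fin p) (Fin m) (Polynomial F)) :
    Matrix (Fin p) (Fin m) F := fun i j => (K i j).coeff (rowDegM K i)

/-- A polynomial matrix is a minimal basis: full row rank at every point of `F` and
row reduced. -/
def IsMinimalBasis {p m : ℕ} (K : Matrix (Fin p) (Fin m) (Polynomial F)) : Prop :=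
  (∀ a : F, (polyEval K a).rank = p) ∧ (hrdMat K).rank = p

end RM

/-!
Reversal moves the problem from `∞` to `0`: `rev L = [[rev M, (rev K₂)ᵀ], [rev K₁, 0]]`, the
reversed bases `rev_{tᵢ} Nᵢ` stay dual to `rev Kᵢ`, and
`G' := rev_{1+t₁+t₂} G = rev_{t₂} N₂ · rev M · (rev_{t₁} N₁)ᵀ`. Work over the local ring of
rational functions without pole at `0`, whose residue map is evaluation at `0`. As `rev Kᵢ` has
full row rank at `0`, it has a right inverse `Sᵢ` over this ring, and `[(rev_{tᵢ} Nᵢ)ᵀ, Sᵢ]` is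
invertible at `0`: `rev Kᵢ` kills the first block and inverts the second. Transforming `rev L` by
these two completions gives `[[G', (0, X)], [(Y; 0), [[1, Z], [0, 1]]]]`, and block elimination
through the unitriangular corner, by factors of determinant `1`, leaves `diag(G', I)`.
-/

namespace RM

open Matrix Polynomial

variable {F : Type*} [Field F]

section Evaluation

variable {a : F}

lemma rEval_eq_eval (x : RatFunc F) (a : F) : rEval x a = RatFunc.eval (RingHom.id F) a x := by
  simp only [rEval, RatFunc.eval, eval₂_id]

lemma RDefinedAt.of_denom_dvd {x : RatFunc F} {q : F[X]} (hd : x.denom ∣ q) (hq : q.eval a ≠ 0) :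
    RDefinedAt x a := by
  obtain ⟨c, rfl⟩ := hd
  exact left_ne_zero_of_mul (by rwa [eval_mul] at hq)

lemma rDefinedAt_algebraMap (p : F[X]) (a : F) : RDefinedAt (algebraMap F[X] (RatFunc F) p) a := by
  simp [RDefinedAt, RatFunc.denom_algebraMap]

lemma rEval_algebraMap (p : F[X]) (a : F) : rEval (algebraMap F[X] (RatFunc F) p) a = p.eval a := by
  simp [rEval, RatFunc.num_algebraMap, RatFunc.denom_algebraMap]

lemma RDefinedAt.add {x y : RatFunc F} (hx : RDefinedAt x a) (hy : RDefinedAt y a) :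
    RDefinedAt (x + y) a :=
  .of_denom_dvd (RatFunc.denom_add_dvd x y) (by rw [eval_mul]; exact mul_ne_zero hx hy)

lemma RDefinedAt.mul {x y : RatFunc F} (hx : RDefinedAt x a) (hy : RDefinedAt y a) :
    RDefinedAt (x * y) a :=
  .of_denom_dvd (RatFunc.denom_mul_dvd x y) (by rw [eval_mul]; exact mul_ne_zero hx hy)

lemma RDefinedAt.neg {x : RatFunc F} (hx : RDefinedAt x a) : RDefinedAt (-x) a := by
  simpa using (rDefinedAt_algebraMap (-1) a).mul hx

lemma RDefinedAt.inv {x : RatFunc F} (h : rEval x a ≠ 0) : RDefinedAt x⁻¹ a := by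
  refine .of_denom_dvd (q := x.num) ?_ fun h0 => h (by simp [rEval, h0])
  conv_lhs => rw [← RatFunc.num_div_denom x, inv_div]
  exact RatFunc.denom_div_dvd x.denom x.num

lemma rEval_add {x y : RatFunc F} (hx : RDefinedAt x a) (hy : RDefinedAt y a) :
    rEval (x + y) a = rEval x a + rEval y a := by
  simp only [rEval_eq_eval]
  exact RatFunc.eval_add _ _ (by rwa [eval₂_id]) (by rwa [eval₂_id])

lemma rEval_mul {x y : RatFunc F} (hx : RDefinedAt x a) (hy : RDefinedAt y a) :
    rEval (x * y) a = rEval x a * rEval y a := by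
  simp only [rEval_eq_eval]
  exact RatFunc.eval_mul _ _ (by rwa [eval₂_id]) (by rwa [eval₂_id])

variable (a) in
/-- The local ring of `F[λ]` at `λ - a`, inside `F(λ)`. -/
def definedSubring : Subring (RatFunc F) where
  carrier := {x | RDefinedAt x a}
  mul_mem' := .mul
  one_mem' := by simpa using rDefinedAt_algebraMap (1 : F[X]) a
  add_mem' := .add
  zero_mem' := by simpa using rDefinedAt_algebraMap (0 : F[X]) a
  neg_mem' := .neg

variable (a) in
noncomputable def evalAt : definedSubring a →+* F where
  toFun x := rEval x.1 a
  map_one' := by simpa using rEval_algebraMap (1 : F[X]) a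
  map_mul' x y := rEval_mul x.2 y.2
  map_zero' := by simpa using rEval_algebraMap (0 : F[X]) a
  map_add' x y := rEval_add x.2 y.2

instance : IsLocalHom (evalAt a) where
  map_nonunit x hx := by
    have h0 : rEval x.1 a ≠ 0 := hx.ne_zero
    have hx0 : x.1 ≠ 0 := fun h => h0 (by simp [h, rEval])
    exact ⟨⟨x, ⟨x.1⁻¹, RDefinedAt.inv h0⟩, Subtype.ext (mul_inv_cancel₀ hx0),
      Subtype.ext (inv_mul_cancel₀ hx0)⟩, rfl⟩

lemma evalAt_surjective : Function.Surjective (evalAt a) := fun c =>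
  ⟨⟨_, rDefinedAt_algebraMap (C c) a⟩, (rEval_algebraMap (C c) a).trans (eval_C ..)⟩

end Evaluation

section Reversal

lemma transcendental_X_inv : Transcendental F (RatFunc.X : RatFunc F)⁻¹ :=
  fun h => RatFunc.transcendental_X (IsAlgebraic.inv_iff.mp h)

/-- The substitution `x(λ) ↦ x(1/λ)`. -/
noncomputable def invSubst : RatFunc F →ₐ[F] RatFunc F :=
  RatFunc.liftAlgHom (aeval (RatFunc.X : RatFunc F)⁻¹)
    (nonZeroDivisors_le_comap_nonZeroDivisors_of_injective _
      (transcendental_iff_injective.mp transcendental_X_inv))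

lemma rRev_eq (g : ℤ) (x : RatFunc F) : rRev g x = RatFunc.X ^ g * invSubst x := by
  rw [rRev, rAtInv, invSubst, RatFunc.liftAlgHom_apply, aeval_def, aeval_def]

lemma algebraMap_reflect {p : F[X]} {n : ℕ} (h : p.natDegree ≤ n) :
    algebraMap F[X] (RatFunc F) (p.reflect n) = rRev n (algebraMap F[X] (RatFunc F) p) := by
  have hX : (RatFunc.X : RatFunc F) ≠ 0 := RatFunc.X_ne_zero
  let := invertibleOfNonzero (inv_ne_zero hX)
  have key := eval₂_reflect_mul_pow (algebraMap F (RatFunc F)) (RatFunc.X : RatFunc F)⁻¹ n p h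
  rw [invOf_eq_inv, inv_inv, ← aeval_def, ← aeval_def, RatFunc.aeval_X_left_eq_algebraMap] at key
  rw [rRev, rAtInv, RatFunc.num_algebraMap, RatFunc.denom_algebraMap, eval₂_one, div_one,
    ← aeval_def, ← key, zpow_natCast, inv_pow, mul_comm, inv_mul_cancel_right₀ (pow_ne_zero _ hX)]

variable {ι κ μ : Type*}

lemma matRev_mul [Fintype κ] (g h : ℤ) (A : Matrix ι κ (RatFunc F)) (B : Matrix κ μ (RatFunc F)) :
    matRev g A * matRev h B = matRev (g + h) (A * B) := by
  ext i j
  simp only [matRev, mul_apply, rRev_eq, map_sum, map_mul, Finset.mul_sum,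
    zpow_add₀ (RatFunc.X_ne_zero (K := F))]
  exact Finset.sum_congr rfl fun k _ => by ring

lemma matRev_transpose (g : ℤ) (A : Matrix ι κ (RatFunc F)) : (matRev g A)ᵀ = matRev g Aᵀ := rfl

lemma matRev_zero (g : ℤ) : matRev g (0 : Matrix ι κ (RatFunc F)) = 0 := by
  ext i j
  simp [matRev, rRev_eq]

lemma natDegree_le_matDeg [Fintype ι] [Fintype κ] (P : Matrix ι κ F[X]) (i : ι) (j : κ) :
    (P i j).natDegree ≤ matDeg P :=
  Finset.le_sup (f := fun p : ι × κ => (P p.1 p.2).natDegree) (Finset.mem_univ (i, j))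

lemma toRat_polyRev {P : Matrix ι κ F[X]} {d : ℕ} (h : ∀ i j, (P i j).natDegree ≤ d) :
    toRat (polyRev d P) = matRev d (toRat P) := by
  ext i j
  exact algebraMap_reflect (h i j)

end Reversal

section BlockAlgebra

variable {R : Type*} [CommRing R]

def basisCompletion {α β κ : Type*} (γ : Type*) [DecidableEq γ] (N : Matrix β κ R)
    (S : Matrix κ α R) : Matrix (κ ⊕ γ) ((β ⊕ α) ⊕ γ) R :=
  fromBlocks (fromCols Nᵀ S) 0 0 1

variable {α₁ α₂ β₁ β₂ ι κ : Type*} [DecidableEq α₁] [DecidableEq α₂]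

theorem basisCompletion_transpose_mul_fromBlocks_mul_basisCompletion [Fintype α₁] [Fintype α₂]
    [Fintype ι] [Fintype κ] (M : Matrix ι κ R) {K₁ : Matrix α₁ κ R} {K₂ : Matrix α₂ ι R}
    {N₁ : Matrix β₁ κ R} {N₂ : Matrix β₂ ι R} {S₁ : Matrix κ α₁ R} {S₂ : Matrix ι α₂ R}
    (hS₁ : K₁ * S₁ = 1) (hS₂ : K₂ * S₂ = 1) (hd₁ : K₁ * N₁ᵀ = 0) (hd₂ : K₂ * N₂ᵀ = 0) :
    (basisCompletion α₁ N₂ S₂)ᵀ * fromBlocks M K₂ᵀ K₁ 0 * basisCompletion α₂ N₁ S₁ =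
      fromBlocks (fromBlocks (N₂ * M * N₁ᵀ) (N₂ * M * S₁) (S₂ᵀ * M * N₁ᵀ) (S₂ᵀ * M * S₁))
        (fromRows 0 1) (fromCols 0 1) 0 := by
  have hd₂' : N₂ * K₂ᵀ = 0 := by rw [← transpose_transpose N₂, ← transpose_mul, hd₂, transpose_zero]
  have hS₂' : S₂ᵀ * K₂ᵀ = 1 := by rw [← transpose_mul, hS₂, transpose_one]
  simp [basisCompletion, fromBlocks_transpose, transpose_fromCols, fromBlocks_multiply,
    fromRows_mul, mul_fromCols, Matrix.mul_assoc, hd₁, hS₁, hd₂', hS₂']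

theorem fromBlocks_fromBlocks_submatrix {A : Matrix β₂ β₁ R} {B : Matrix β₂ α₁ R}
    {C : Matrix α₂ β₁ R} {D : Matrix α₂ α₁ R} :
    (fromBlocks (fromBlocks A B C D) (fromRows 0 1) (fromCols 0 1) 0).submatrix
        (Equiv.sumAssoc β₂ α₂ α₁).symm
        ((Equiv.sumCongr (Equiv.refl β₁) (Equiv.sumComm α₂ α₁)).trans
          (Equiv.sumAssoc β₁ α₁ α₂).symm) =
      fromBlocks A (fromCols 0 B) (fromRows C 0) (fromBlocks 1 D 0 1) := by
  ext (i | i | i) (j | j | j) <;> simp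

theorem fromBlocks_eliminate {m n m' n' : Type*} [Fintype m] [Fintype n] [Fintype m']
    [Fintype n'] [DecidableEq m] [DecidableEq n] [DecidableEq n'] {A : Matrix m n R}
    {B : Matrix m n' R} {C : Matrix m' n R} {D : Matrix m' n' R} {E : Matrix n' m' R}
    (hED : E * D = 1) (hBEC : B * E * C = 0) :
    fromBlocks (1 : Matrix m m R) (-(B * E)) 0 E * fromBlocks A B C D *
        fromBlocks (1 : Matrix n n R) 0 (-(E * C)) (1 : Matrix n' n' R) = fromBlocks A 0 0 1 := by
  simp [fromBlocks_multiply, hBEC, hED, Matrix.mul_assoc]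

end BlockAlgebra

section LinearAlgebra

variable {K : Type*} [Field K] {α β γ κ ρ : Type*} [Fintype α] [Fintype β] [Fintype κ]
  [DecidableEq α]

theorem isUnit_det_submatrix_of_mulVec_injective {ι : Type*} [Fintype ρ] [DecidableEq ρ]
    {A : Matrix ι κ K} (hA : Function.Injective A.mulVec) (e₁ : ρ ≃ ι) (e₂ : ρ ≃ κ) :
    IsUnit (A.submatrix e₁ e₂).det := by
  rw [← isUnit_iff_isUnit_det, ← mulVec_injective_iff_isUnit]
  intro v w h
  simp only [submatrix_mulVec_equiv] at h
  exact e₂.symm.surjective.injective_comp_right (hA (e₁.surjective.injective_comp_right h))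

theorem mulVec_transpose_injective_of_rank_eq {N : Matrix β κ K}
    (hN : N.rank = Fintype.card β) : Function.Injective Nᵀ.mulVec := by
  rw [mulVec_injective_iff, col_transpose, linearIndependent_iff_card_eq_finrank_span,
    Set.finrank, ← rank_eq_finrank_span_row, hN]

theorem mulVec_fromCols_injective {A : Matrix α κ K} {N : Matrix β κ K} {S : Matrix κ α K}
    (hN : N.rank = Fintype.card β) (hAN : A * Nᵀ = 0) (hAS : A * S = 1) :
    Function.Injective (fromCols Nᵀ S).mulVec := by
  rw [← coe_mulVecLin, ← LinearMap.ker_eq_bot, ker_mulVecLin_eq_bot_iff]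
  intro v hv
  rw [← Sum.elim_comp_inl_inr v, fromCols_mulVec_sumElim] at hv
  have hr : v ∘ Sum.inr = 0 := by
    simpa [mulVec_add, mulVec_mulVec, hAN, hAS] using congrArg (A *ᵥ ·) hv
  have hl : v ∘ Sum.inl = 0 :=
    mulVec_transpose_injective_of_rank_eq hN (by simpa [hr] using hv)
  rw [← Sum.elim_comp_inl_inr v, hl, hr]
  ext (i | i) <;> rfl

theorem mulVec_basisCompletion_injective [Fintype γ] [DecidableEq γ] {A : Matrix α κ K}
    {N : Matrix β κ K} {S : Matrix κ α K} (hN : N.rank = Fintype.card β) (hAN : A * Nᵀ = 0)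
    (hAS : A * S = 1) : Function.Injective (basisCompletion γ N S).mulVec := by
  rw [← coe_mulVecLin, ← LinearMap.ker_eq_bot, ker_mulVecLin_eq_bot_iff]
  intro v hv
  obtain ⟨x, y, rfl⟩ : ∃ x y, v = Sum.elim x y := ⟨_, _, (Sum.elim_comp_inl_inr v).symm⟩
  rw [basisCompletion, fromBlocks_mulVec, ← Sum.elim_zero_zero, Sum.elim_eq_iff] at hv
  simp only [zero_mulVec, add_zero, zero_add, one_mulVec, Sum.elim_comp_inl,
    Sum.elim_comp_inr] at hv
  rw [mulVec_fromCols_injective hN hAN hAS (hv.1.trans (mulVec_zero _).symm), hv.2,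
    Sum.elim_zero_zero]

theorem exists_mul_eq_one_of_rank_eq {A : Matrix α κ K} (hA : A.rank = Fintype.card α) :
    ∃ B : Matrix κ α K, A * B = 1 := by
  rw [← mulVec_surjective_iff_exists_right_inverse, ← coe_mulVecLin, ← LinearMap.range_eq_top]
  apply Submodule.eq_top_of_finrank_eq
  rw [← rank, hA, Module.finrank_fintype_fun_eq_card]

end LinearAlgebra

section LocalRing

variable {R K : Type*} [CommRing R] [Field K] (φ : R →+* K)

theorem exists_mul_eq_one_of_rank_map [IsLocalHom φ] (hφ : Function.Surjective φ)
    {α κ : Type*} [Fintype α] [Fintype κ] [DecidableEq α] {A : Matrix α κ R}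
    (hA : (A.map φ).rank = Fintype.card α) : ∃ B : Matrix κ α R, A * B = 1 := by
  obtain ⟨B₀, hB₀⟩ := exists_mul_eq_one_of_rank_eq hA
  set B := B₀.map (Function.surjInv hφ)
  have hB : B.map φ = B₀ := by ext; simp [B, Function.surjInv_eq hφ]
  have hdet : IsUnit (A * B).det := by
    apply isUnit_of_map_unit φ
    rw [RingHom.map_det, RingHom.mapMatrix_apply, Matrix.map_mul, hB, hB₀, det_one]
    exact isUnit_one
  exact ⟨B * (A * B)⁻¹, by rw [← Matrix.mul_assoc, mul_nonsing_inv _ hdet]⟩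

theorem mulVec_map_basisCompletion_injective {α β γ κ : Type*} [Fintype α] [Fintype β]
    [Fintype γ] [Fintype κ] [DecidableEq α] [DecidableEq γ] {A : Matrix α κ R}
    {N : Matrix β κ R} {S : Matrix κ α R} (hN : (N.map φ).rank = Fintype.card β)
    (hAN : A * Nᵀ = 0) (hAS : A * S = 1) :
    Function.Injective ((basisCompletion γ N S).map φ).mulVec := by
  have hmap : (basisCompletion γ N S).map φ = basisCompletion γ (N.map φ) (S.map φ) := by
    simp [basisCompletion, fromBlocks_map, fromCols_map, transpose_map]
  rw [hmap]
  refine mulVec_basisCompletion_injective (A := A.map φ) hN ?_ ?_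
  · rw [← transpose_map, ← Matrix.map_mul, hAN, Matrix.map_zero _ (map_zero φ)]
  · rw [← Matrix.map_mul, hAS, Matrix.map_one _ (map_zero φ) (map_one φ)]

variable {α₁ α₂ β₁ β₂ ι κ : Type*} [Fintype α₁] [Fintype α₂] [Fintype β₁] [Fintype β₂]
  [Fintype ι] [Fintype κ] [DecidableEq α₁] [DecidableEq α₂] [DecidableEq β₁] [DecidableEq β₂]

theorem exists_isUnit_mul_fromBlocks_mul_eq [IsLocalHom φ] (hφ : Function.Surjective φ)
    (M : Matrix ι κ R) {K₁ : Matrix α₁ κ R} {K₂ : Matrix α₂ ι R} {N₁ : Matrix β₁ κ R}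
    {N₂ : Matrix β₂ ι R} (hK₁ : (K₁.map φ).rank = Fintype.card α₁)
    (hK₂ : (K₂.map φ).rank = Fintype.card α₂) (hN₁ : (N₁.map φ).rank = Fintype.card β₁)
    (hN₂ : (N₂.map φ).rank = Fintype.card β₂) (hd₁ : K₁ * N₁ᵀ = 0) (hd₂ : K₂ * N₂ᵀ = 0)
    (e : β₂ ⊕ (α₂ ⊕ α₁) ≃ ι ⊕ α₁) (f : β₁ ⊕ (α₂ ⊕ α₁) ≃ κ ⊕ α₂) :
    ∃ (P : Matrix (β₂ ⊕ (α₂ ⊕ α₁)) (β₂ ⊕ (α₂ ⊕ α₁)) R)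
      (Q : Matrix (β₁ ⊕ (α₂ ⊕ α₁)) (β₁ ⊕ (α₂ ⊕ α₁)) R),
      IsUnit (P.map φ).det ∧ IsUnit (Q.map φ).det ∧
        P * (fromBlocks M K₂ᵀ K₁ 0).submatrix e f * Q = fromBlocks (N₂ * M * N₁ᵀ) 0 0 1 := by
  obtain ⟨S₁, hS₁⟩ := exists_mul_eq_one_of_rank_map φ hφ hK₁
  obtain ⟨S₂, hS₂⟩ := exists_mul_eq_one_of_rank_map φ hφ hK₂
  set T₁ := basisCompletion α₂ N₁ S₁
  set T₂ := basisCompletion α₁ N₂ S₂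
  set σ₁ := (Equiv.sumCongr (Equiv.refl β₁) (Equiv.sumComm α₂ α₁)).trans
    (Equiv.sumAssoc β₁ α₁ α₂).symm
  set σ₂ := (Equiv.sumAssoc β₂ α₂ α₁).symm
  set B : Matrix β₂ (α₂ ⊕ α₁) R := fromCols 0 (N₂ * M * S₁)
  set C : Matrix (α₂ ⊕ α₁) β₁ R := fromRows (S₂ᵀ * M * N₁ᵀ) 0
  set D : Matrix (α₂ ⊕ α₁) (α₂ ⊕ α₁) R := fromBlocks 1 (S₂ᵀ * M * S₁) 0 1
  set E : Matrix (α₂ ⊕ α₁) (α₂ ⊕ α₁) R := fromBlocks 1 (-(S₂ᵀ * M * S₁)) 0 1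
  have hT : (T₂ᵀ * fromBlocks M K₂ᵀ K₁ 0 * T₁).submatrix σ₂ σ₁ =
      fromBlocks (N₂ * M * N₁ᵀ) B C D := by
    rw [basisCompletion_transpose_mul_fromBlocks_mul_basisCompletion M hS₁ hS₂ hd₁ hd₂]
    exact fromBlocks_fromBlocks_submatrix
  have hED : E * D = 1 := by simp [E, D, fromBlocks_multiply]
  have hBEC : B * E * C = 0 := by simp [B, C, E, fromCols_mul_fromBlocks, fromCols_mul_fromRows]
  set L : Matrix (β₂ ⊕ (α₂ ⊕ α₁)) (β₂ ⊕ (α₂ ⊕ α₁)) R := fromBlocks 1 (-(B * E)) 0 E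
  set U : Matrix (β₁ ⊕ (α₂ ⊕ α₁)) (β₁ ⊕ (α₂ ⊕ α₁)) R := fromBlocks 1 0 (-(E * C)) 1
  refine ⟨L * T₂ᵀ.submatrix σ₂ e, T₁.submatrix f σ₁ * U, ?_, ?_, ?_⟩
  · have hL : L.det = 1 := by simp [L, E, det_fromBlocks_zero₂₁]
    rw [← RingHom.mapMatrix_apply, ← RingHom.map_det, det_mul, hL, one_mul, RingHom.map_det,
      RingHom.mapMatrix_apply, ← submatrix_map, ← det_transpose, transpose_submatrix,
      transpose_map, transpose_transpose]
    exact isUnit_det_submatrix_of_mulVec_injective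
      (mulVec_map_basisCompletion_injective φ hN₂ hd₂ hS₂) e σ₂
  · have hU : U.det = 1 := by simp [U]
    rw [← RingHom.mapMatrix_apply, ← RingHom.map_det, det_mul, hU, mul_one, RingHom.map_det,
      RingHom.mapMatrix_apply, ← submatrix_map]
    exact isUnit_det_submatrix_of_mulVec_injective
      (mulVec_map_basisCompletion_injective φ hN₁ hd₁ hS₁) f σ₁
  · calc _ = L * (T₂ᵀ.submatrix σ₂ e * (fromBlocks M K₂ᵀ K₁ 0).submatrix e f *
            T₁.submatrix f σ₁) * U := by simp only [Matrix.mul_assoc]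
      _ = _ := by rw [submatrix_mul_equiv, submatrix_mul_equiv, hT, fromBlocks_eliminate hED hBEC]

end LocalRing

section EquivAt

variable {a : F} {ι κ ι' κ' : Type*}

lemma DefinedAt.exists_map_subtype {A : Matrix ι κ (RatFunc F)} (h : DefinedAt A a) :
    ∃ A' : Matrix ι κ (definedSubring a), A'.map (definedSubring a).subtype = A :=
  ⟨fun i j => ⟨A i j, h i j⟩, rfl⟩

lemma matEval_map_subtype (A : Matrix ι κ (definedSubring a)) :
    matEval (A.map (definedSubring a).subtype) a = A.map (evalAt a) := rfl

variable [Fintype ι] [Fintype κ] [DecidableEq ι] [DecidableEq κ]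

lemma equivAt_map_subtype {G H : Matrix ι κ (definedSubring a)}
    {P : Matrix ι ι (definedSubring a)} {Q : Matrix κ κ (definedSubring a)}
    (hP : IsUnit (P.map (evalAt a)).det) (hQ : IsUnit (Q.map (evalAt a)).det)
    (h : P * G * Q = H) :
    EquivAt (G.map (definedSubring a).subtype) (H.map (definedSubring a).subtype) a :=
  ⟨P.map (definedSubring a).subtype, Q.map (definedSubring a).subtype,
    ⟨fun i j => (P i j).2, hP⟩, ⟨fun i j => (Q i j).2, hQ⟩, by
    rw [← h, Matrix.map_mul, Matrix.map_mul]⟩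

lemma EquivAt.submatrix [Fintype ι'] [Fintype κ'] [DecidableEq ι'] [DecidableEq κ']
    {G H : Matrix ι κ (RatFunc F)} (h : EquivAt G H a) (e : ι' ≃ ι) (f : κ' ≃ κ) :
    EquivAt (G.submatrix e f) (H.submatrix e f) a := by
  obtain ⟨R₁, R₂, hR₁, hR₂, rfl⟩ := h
  refine ⟨R₁.submatrix e e, R₂.submatrix f f, ⟨fun i j => hR₁.1 _ _, ?_⟩,
    ⟨fun i j => hR₂.1 _ _, ?_⟩, by rw [submatrix_mul_equiv, submatrix_mul_equiv]⟩
  · exact (det_submatrix_equiv_self e (matEval R₁ a)).symm ▸ hR₁.2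
  · exact (det_submatrix_equiv_self f (matEval R₂ a)).symm ▸ hR₂.2

end EquivAt

def finAddSumComm (n s t : ℕ) : Fin (n + (s + t)) ≃ Fin n ⊕ (Fin t ⊕ Fin s) :=
  finSumFinEquiv.symm.trans
    (Equiv.sumCongr (Equiv.refl _) (finSumFinEquiv.symm.trans (Equiv.sumComm _ _)))

lemma diagPad_eq_submatrix {p m : ℕ} (G : Matrix (Fin p) (Fin m) (RatFunc F)) (s t : ℕ) :
    diagPad G (s + t) =
      (fromBlocks G 0 0 1).submatrix (finAddSumComm p s t) (finAddSumComm m s t) := by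
  ext i j
  obtain ⟨i, rfl⟩ := finSumFinEquiv.surjective i
  obtain ⟨j, rfl⟩ := finSumFinEquiv.surjective j
  rcases i with i | i <;> rcases j with j | j <;>
    simp [diagPad, finAddSumComm, one_apply, Sum.swap_leftInverse.injective.eq_iff]

theorem equivAt_reindex_fromBlocks_diagPad {phat mhat m1 p2 n1 n2 : ℕ} {a : F}
    {M : Matrix (Fin phat) (Fin mhat) (RatFunc F)} {K1 : Matrix (Fin m1) (Fin mhat) (RatFunc F)}
    {K2 : Matrix (Fin p2) (Fin phat) (RatFunc F)} {N1 : Matrix (Fin n1) (Fin mhat) (RatFunc F)}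
    {N2 : Matrix (Fin n2) (Fin phat) (RatFunc F)} (hM : DefinedAt M a)
    (hK1 : FullRowRankAt K1 a) (hK2 : FullRowRankAt K2 a) (hN1 : FullRowRankAt N1 a)
    (hN2 : FullRowRankAt N2 a) (hd1 : K1 * N1ᵀ = 0) (hd2 : K2 * N2ᵀ = 0)
    (hn1 : m1 + n1 = mhat) (hn2 : p2 + n2 = phat) :
    EquivAt
      (reindex (finCongr (by omega : phat + m1 = n2 + (m1 + p2)))
        (finCongr (by omega : mhat + p2 = n1 + (m1 + p2)))
        (reindex finSumFinEquiv finSumFinEquiv (fromBlocks M K2ᵀ K1 0)))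
      (diagPad (N2 * M * N1ᵀ) (m1 + p2)) a := by
  obtain ⟨M, rfl⟩ := hM.exists_map_subtype
  obtain ⟨K1, rfl⟩ := hK1.1.exists_map_subtype
  obtain ⟨K2, rfl⟩ := hK2.1.exists_map_subtype
  obtain ⟨N1, rfl⟩ := hN1.1.exists_map_subtype
  obtain ⟨N2, rfl⟩ := hN2.1.exists_map_subtype
  rw [← transpose_map, ← Matrix.map_mul, ← Matrix.map_zero _ (map_zero (definedSubring a).subtype)]
    at hd1 hd2
  set g := finAddSumComm n2 m1 p2
  set g' := finAddSumComm n1 m1 p2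
  obtain ⟨P, Q, hP, hQ, hPQ⟩ := exists_isUnit_mul_fromBlocks_mul_eq (evalAt a) evalAt_surjective M
    (by rw [Fintype.card_fin, ← matEval_map_subtype]; exact hK1.2)
    (by rw [Fintype.card_fin, ← matEval_map_subtype]; exact hK2.2)
    (by rw [Fintype.card_fin, ← matEval_map_subtype]; exact hN1.2)
    (by rw [Fintype.card_fin, ← matEval_map_subtype]; exact hN2.2)
    (Matrix.map_injective Subtype.val_injective hd1)
    (Matrix.map_injective Subtype.val_injective hd2)
    (g.symm.trans ((finCongr (by omega)).symm.trans finSumFinEquiv.symm))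
    (g'.symm.trans ((finCongr (by omega)).symm.trans finSumFinEquiv.symm))
  convert (equivAt_map_subtype hP hQ hPQ).submatrix g g' using 1
  · rw [← transpose_map, ← Matrix.map_zero _ (map_zero (definedSubring a).subtype),
      ← fromBlocks_map]
    ext i j
    simp [reindex_apply]
  · rw [diagPad_eq_submatrix, fromBlocks_map, Matrix.map_mul, Matrix.map_mul, transpose_map,
      Matrix.map_zero _ (map_zero _), Matrix.map_zero _ (map_zero _),
      Matrix.map_one _ (map_zero _) (map_one _)]

end RM

/-- Let `L = [[M, K₂ᵀ], [K₁, 0]]` be a block full rank pencil of degree `1`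
and let `N₁`, `N₂` be rational bases dual to `K₁`, `K₂`. If for `i = 1, 2` the pencil
`rev₁ Kᵢ = λ Kᵢ(1/λ)` has full row rank at `0` and there are integers `tᵢ` such that
`rev_{tᵢ} Nᵢ` has full row rank at `0`, then `rev L = λ L(1/λ)` is equivalent at `0` to
`diag(rev_{1+t₁+t₂} G, I_{m₁+p₂})`, where `G = N₂ M N₁ᵀ`; i.e. `L` is a linearization with
empty state matrix of `G` at `∞` of grade `1 + t₁ + t₂`. -/
theorem blockFullRankPencil_isLinearizationAtInf {F : Type*} [Field F]
    {phat mhat m1 p2 n1 n2 : ℕ}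
    (M : Matrix (Fin phat) (Fin mhat) (Polynomial F))
    (K1 : Matrix (Fin m1) (Fin mhat) (Polynomial F))
    (K2 : Matrix (Fin p2) (Fin phat) (Polynomial F))
    (hdeg : RM.matDeg (Matrix.fromBlocks M K2.transpose K1 0) = 1)
    (N1 : Matrix (Fin n1) (Fin mhat) (RatFunc F))
    (N2 : Matrix (Fin n2) (Fin phat) (RatFunc F))
    (hn1 : m1 + n1 = mhat) (hn2 : p2 + n2 = phat)
    (hdual1 : RM.toRat K1 * N1.transpose = 0) (hdual2 : RM.toRat K2 * N2.transpose = 0)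
    (hK1rev : RM.FullRowRankAt (RM.toRat (RM.polyRev 1 K1)) (0 : F))
    (hK2rev : RM.FullRowRankAt (RM.toRat (RM.polyRev 1 K2)) (0 : F))
    (t1 t2 : ℤ)
    (hN1rev : RM.FullRowRankAt (RM.matRev t1 N1) (0 : F))
    (hN2rev : RM.FullRowRankAt (RM.matRev t2 N2) (0 : F)) :
    RM.EquivAt
      (Matrix.reindex (finCongr (by omega : phat + m1 = n2 + (m1 + p2)))
        (finCongr (by omega : mhat + p2 = n1 + (m1 + p2)))
        (Matrix.reindex finSumFinEquiv finSumFinEquiv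
          (RM.toRat (RM.polyRev 1 (Matrix.fromBlocks M K2.transpose K1 0)))))
      (RM.diagPad (RM.matRev (1 + t1 + t2) (N2 * RM.toRat M * N1.transpose)) (m1 + p2))
      (0 : F) := by
  open RM in
  have hL := hdeg ▸ natDegree_le_matDeg (fromBlocks M K2ᵀ K1 0)
  have hrevL : toRat (polyRev 1 (fromBlocks M K2ᵀ K1 0)) =
      fromBlocks (toRat (polyRev 1 M)) (toRat (polyRev 1 K2))ᵀ (toRat (polyRev 1 K1)) 0 := by
    ext (i | i) (j | j) <;> simp [toRat, polyRev]
  have hrevG : matRev (1 + t1 + t2) (N2 * toRat M * N1ᵀ) =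
      matRev t2 N2 * toRat (polyRev 1 M) * (matRev t1 N1)ᵀ := by
    rw [toRat_polyRev (P := M) fun i j => hL (.inl i) (.inl j), matRev_transpose, matRev_mul,
      matRev_mul]
    congr 1
    ring
  rw [hrevL, hrevG]
  refine equivAt_reindex_fromBlocks_diagPad (fun i j => rDefinedAt_algebraMap _ _) hK1rev hK2rev
    hN1rev hN2rev ?_ ?_ hn1 hn2
  · rw [toRat_polyRev (P := K1) fun i j => hL (.inr i) (.inl j), matRev_transpose, matRev_mul,
      hdual1, matRev_zero]
  · rw [toRat_polyRev (P := K2) fun i j => hL (.inl j) (.inr i), matRev_transpose, matRev_mul,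
      hdual2, matRev_zero]
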